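/- Let ω ∈ ℝ and K, T > 0 satisfy ω > 2KT, let μ0 ∈ (0,1/2) be such that f̄ attains its minimum over [0,1] exactly at μ0 and μ1 := 1−μ0, and set f(s) := f̄(s) − f̄(μ0). Let d > 0, δ > 0, ε > 0, y0 < y1, and let c be a C¹ function with values in [0,1] on an open set containing [−d,d]×[y0,y1]. Suppose E ⊆ (−d,d) is measurable with ℒ¹(E) > d and for every x ∈ E one has |c(x,y0) − μ0| ≤ δ and |c(x,y1) − μ1| ≤ δ. Then ∫_{(−d,d)×(y0,y1)} ( (1/ε)·f(c(z)) + ε·‖∇c(z)‖² ) dz ≥ d · C_δ, where C_δ := inf { d_I(s,s′) : s, s′ ∈ [0,1], |s−μ0| ≤ δ, |s′−μ1| ≤ δ }. Moreover, if 2δ < μ1 − μ0 then C_δ > 0. -/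

import Mathlib

/-- The chemical free energy density `f̄(s) = ω s(1-s) + K T (s log s + (1-s) log (1-s))`.
Since `Real.log 0 = 0`, this formula automatically realizes the continuous extension
`f̄(0) = f̄(1) = 0`. -/
noncomputable def fbar (ω K T : ℝ) (s : ℝ) : ℝ :=
  ω * s * (1 - s) + K * T * (s * Real.log s + (1 - s) * Real.log (1 - s))

/-- The geodesic distance on `[0,1]` associated with the well potential `f`:
`d_I(s,s') = inf { ∫₀¹ √(f(ψ(t))) |ψ'(t)| dt : ψ ∈ C¹([0,1],[0,1]), ψ(0)=s, ψ(1)=s' }`. -/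
noncomputable def dI (f : ℝ → ℝ) (s s' : ℝ) : ℝ :=
  sInf { v : ℝ | ∃ ψ : ℝ → ℝ, ContDiffOn ℝ 1 ψ (Set.Icc 0 1) ∧
    (∀ t ∈ Set.Icc (0 : ℝ) 1, ψ t ∈ Set.Icc (0 : ℝ) 1) ∧ ψ 0 = s ∧ ψ 1 = s' ∧
    v = ∫ t in (0 : ℝ)..1, Real.sqrt (f (ψ t)) * |derivWithin ψ (Set.Icc 0 1) t| }

/-- The transition cost between the δ-neighborhoods of the two wells:
`C_δ = inf { d_I(s,s') : s,s' ∈ [0,1], |s-μ0| ≤ δ, |s'-μ1| ≤ δ }`. -/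
noncomputable def Cdelta (f : ℝ → ℝ) (μ0 μ1 δ : ℝ) : ℝ :=
  sInf { v : ℝ | ∃ s s' : ℝ, s ∈ Set.Icc (0 : ℝ) 1 ∧ s' ∈ Set.Icc (0 : ℝ) 1 ∧
    |s - μ0| ≤ δ ∧ |s' - μ1| ≤ δ ∧ v = dI f s s' }

/-- Squared Euclidean norm of the gradient of a scalar field on `ℝ²`. -/
noncomputable def gradSq (c : ℝ × ℝ → ℝ) (z : ℝ × ℝ) : ℝ :=
  (fderiv ℝ c z (1, 0)) ^ 2 + (fderiv ℝ c z (0, 1)) ^ 2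

/-!
Along a vertical segment `y ↦ c (x, y)` the pointwise inequality `√f |∂_y c| ≤ f / ε + ε |∇c|²`
bounds the energy of the slice from below by the `√f`-weighted length of that path, hence by
`d_I (c (x, y0)) (c (x, y1)) ≥ C_δ` when `x ∈ E`; integrating over `E` (Fubini) gives
`|E| C_δ ≥ d C_δ`. For positivity, `f` has a positive minimum `m` on `[μ0 + δ, μ1 - δ]`, and the
substitution `u = ψ t` applied to `min (√f) (√m)` shows that every path from the `δ`-neighbourhood
of `μ0` to that of `μ1` costs at least `√m (μ1 - μ0 - 2δ)`.
-/

open Set MeasureTheory intervalIntegral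

lemma continuous_fbar (ω K T : ℝ) : Continuous (fbar ω K T) := by
  have h : Continuous fun s : ℝ => (1 - s) * Real.log (1 - s) :=
    Real.continuous_mul_log.comp (continuous_const.sub continuous_id)
  unfold fbar
  fun_prop

noncomputable def energyDensity (f : ℝ → ℝ) (ε : ℝ) (c : ℝ × ℝ → ℝ) (z : ℝ × ℝ) : ℝ :=
  1 / ε * f (c z) + ε * gradSq c z

lemma continuousOn_gradSq {c : ℝ × ℝ → ℝ} {U : Set (ℝ × ℝ)} (hU : IsOpen U)
    (hc : ContDiffOn ℝ 1 c U) : ContinuousOn (gradSq c) U := by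
  have hc' := hc.continuousOn_fderiv_of_isOpen hU le_rfl
  exact ((hc'.clm_apply continuousOn_const).pow 2).add ((hc'.clm_apply continuousOn_const).pow 2)

lemma continuousOn_energyDensity {f : ℝ → ℝ} (hf : Continuous f) (ε : ℝ) {c : ℝ × ℝ → ℝ}
    {U : Set (ℝ × ℝ)} (hU : IsOpen U) (hc : ContDiffOn ℝ 1 c U) :
    ContinuousOn (energyDensity f ε c) U :=
  (continuousOn_const.mul (hf.comp_continuousOn hc.continuousOn)).add
    (continuousOn_const.mul (continuousOn_gradSq hU hc))

lemma energyDensity_nonneg {f : ℝ → ℝ} {ε : ℝ} {c : ℝ × ℝ → ℝ} {z : ℝ × ℝ} (hε : 0 < ε)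
    (hfc : 0 ≤ f (c z)) : 0 ≤ energyDensity f ε c z :=
  add_nonneg (mul_nonneg (by positivity) hfc)
    (mul_nonneg hε.le (add_nonneg (sq_nonneg _) (sq_nonneg _)))

lemma sqrt_mul_abs_le_energy {A ε : ℝ} (p q : ℝ) (hA : 0 ≤ A) (hε : 0 < ε) :
    √A * |q| ≤ 1 / ε * A + ε * (p ^ 2 + q ^ 2) := by
  have hAM : ε * (√A * |q|) ≤ A + ε ^ 2 * q ^ 2 := by
    nlinarith [sq_nonneg (√A - ε * |q|), sq_abs q, Real.sq_sqrt hA, Real.sqrt_nonneg A,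
      abs_nonneg q]
  have hdiv : √A * |q| ≤ 1 / ε * A + ε * q ^ 2 := by
    rw [← mul_le_mul_iff_right₀ hε]
    field_simp
    linarith
  nlinarith [sq_nonneg p]

lemma dI_nonneg (f : ℝ → ℝ) (s s' : ℝ) : 0 ≤ dI f s s' :=
  Real.sInf_nonneg <| by
    rintro v ⟨ψ, -, -, -, -, rfl⟩
    exact integral_nonneg zero_le_one fun t _ => by positivity

/-- Substituting `u = ψ t` turns the left-hand side into `∫ g (ψ t) ψ' t dt`. -/
lemma integral_le_integral_sqrt_mul_abs_derivWithin {f g ψ : ℝ → ℝ} (hf : Continuous f)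
    (hg : Continuous g) (hg0 : ∀ u ∈ Icc (0 : ℝ) 1, 0 ≤ g u)
    (hgf : ∀ u ∈ Icc (0 : ℝ) 1, g u ≤ √(f u))
    (hψ : ContDiffOn ℝ 1 ψ (Icc 0 1)) (hψ01 : MapsTo ψ (Icc 0 1) (Icc 0 1)) :
    ∫ u in ψ 0..ψ 1, g u ≤ ∫ t in (0 : ℝ)..1, √(f (ψ t)) * |derivWithin ψ (Icc 0 1) t| := by
  set ψ' := derivWithin ψ (Icc 0 1)
  have hI : uIcc (0 : ℝ) 1 = Icc 0 1 := uIcc_of_le zero_le_one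
  have hψ' : ContinuousOn ψ' (Icc 0 1) :=
    hψ.continuousOn_derivWithin (uniqueDiffOn_Icc one_pos) le_rfl
  have hderiv : ∀ t ∈ Ioo (min 0 1) (max 0 1), HasDerivWithinAt ψ (ψ' t) (Ioi t) t := by
    intro t ht
    simp only [zero_le_one, min_eq_left, max_eq_right] at ht
    have hnhds : Icc (0 : ℝ) 1 ∈ nhds t := Icc_mem_nhds ht.1 ht.2
    have hdiff := ((hψ.differentiableOn one_ne_zero) t (Ioo_subset_Icc_self ht)).differentiableAt
      hnhds
    rw [show ψ' t = deriv ψ t from derivWithin_of_mem_nhds hnhds]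
    exact hdiff.hasDerivAt.hasDerivWithinAt
  rw [← integral_comp_mul_deriv'' (hI ▸ hψ.continuousOn) hderiv (hI ▸ hψ') hg.continuousOn]
  refine integral_mono_on zero_le_one ?_ ?_ fun t ht => ?_
  · exact ((hg.comp_continuousOn hψ.continuousOn).mul hψ').intervalIntegrable_of_Icc zero_le_one
  · exact (((hf.comp_continuousOn hψ.continuousOn).sqrt).mul hψ'.abs).intervalIntegrable_of_Icc
      zero_le_one
  · calc g (ψ t) * ψ' t ≤ g (ψ t) * |ψ' t| :=
          mul_le_mul_of_nonneg_left (le_abs_self _) (hg0 _ (hψ01 ht))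
      _ ≤ √(f (ψ t)) * |ψ' t| := mul_le_mul_of_nonneg_right (hgf _ (hψ01 ht)) (abs_nonneg _)

lemma integral_le_dI {f g : ℝ → ℝ} (hf : Continuous f) (hg : Continuous g)
    (hg0 : ∀ u ∈ Icc (0 : ℝ) 1, 0 ≤ g u) (hgf : ∀ u ∈ Icc (0 : ℝ) 1, g u ≤ √(f u))
    {s s' : ℝ} (hs : s ∈ Icc (0 : ℝ) 1) (hs' : s' ∈ Icc (0 : ℝ) 1) :
    ∫ u in s..s', g u ≤ dI f s s' := by
  have hsegment : MapsTo (fun t => s + t * (s' - s)) (Icc 0 1) (Icc 0 1) := by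
    rintro t ⟨ht0, ht1⟩
    constructor <;> nlinarith [hs.1, hs.2, hs'.1, hs'.2]
  refine le_csInf ⟨_, fun t => s + t * (s' - s), by fun_prop, hsegment, by simp, by ring, rfl⟩ ?_
  rintro v ⟨ψ, hψ, hψ01, rfl, rfl, rfl⟩
  exact integral_le_integral_sqrt_mul_abs_derivWithin hf hg hg0 hgf hψ hψ01

lemma sqrt_mul_sub_le_dI {f : ℝ → ℝ} (hf : Continuous f) {a b m s s' : ℝ}
    (hm : ∀ u ∈ Icc a b, m ≤ f u) (hsa : s ≤ a) (hab : a ≤ b) (hbs' : b ≤ s')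
    (hs : s ∈ Icc (0 : ℝ) 1) (hs' : s' ∈ Icc (0 : ℝ) 1) : √m * (b - a) ≤ dI f s s' := by
  set g := fun u => min √(f u) √m
  have hg : Continuous g := by fun_prop
  have hg_eq : EqOn g (fun _ => √m) (uIcc a b) := fun u hu =>
    min_eq_right (Real.sqrt_le_sqrt (hm u (uIcc_of_le hab ▸ hu)))
  calc √m * (b - a) = ∫ u in a..b, g u := by rw [integral_congr hg_eq]; simp [mul_comm]
    _ ≤ ∫ u in s..s', g u :=
        integral_mono_interval hsa hab hbs' (ae_of_all _ fun u => by positivity)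
          (hg.intervalIntegrable _ _)
    _ ≤ dI f s s' :=
        integral_le_dI hf hg (fun u _ => by positivity) (fun u _ => min_le_left _ _) hs hs'

/-- A `C¹` path on `[y0, y1]`, rescaled to `[0, 1]`, is admissible in the definition of `dI`. -/
lemma dI_le_integral_of_hasDerivAt {f γ γ' : ℝ → ℝ} {y0 y1 : ℝ} (hy : y0 < y1)
    (hγ : ∀ y ∈ Icc y0 y1, HasDerivAt γ (γ' y) y) (hγ' : ContinuousOn γ' (Icc y0 y1))
    (hγ01 : MapsTo γ (Icc y0 y1) (Icc 0 1)) :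
    dI f (γ y0) (γ y1) ≤ ∫ y in y0..y1, √(f (γ y)) * |γ' y| := by
  set L := y1 - y0
  set σ : ℝ → ℝ := fun t => L * t + y0
  have hL : 0 < L := sub_pos.2 hy
  have hσ : MapsTo σ (Icc 0 1) (Icc y0 y1) := by
    rintro t ⟨ht0, ht1⟩
    constructor <;> nlinarith
  have hψ : ∀ t ∈ Icc (0 : ℝ) 1, HasDerivAt (γ ∘ σ) (γ' (σ t) * L) t := fun t ht =>
    (hγ _ (hσ ht)).comp t ((((hasDerivAt_id t).const_mul L).add_const y0).congr_deriv (mul_one L))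
  have hψ' : EqOn (derivWithin (γ ∘ σ) (Icc 0 1)) (fun t => γ' (σ t) * L) (Icc 0 1) :=
    fun t ht => (hψ t ht).hasDerivWithinAt.derivWithin (uniqueDiffOn_Icc one_pos t ht)
  have hC1 : ContDiffOn ℝ 1 (γ ∘ σ) (Icc 0 1) :=
    (contDiffOn_one_iff_derivWithin (uniqueDiffOn_Icc one_pos)).2
      ⟨fun t ht => (hψ t ht).differentiableAt.differentiableWithinAt,
        ((hγ'.comp (by fun_prop) hσ).mul continuousOn_const).congr hψ'⟩
  have hcost : ∫ t in (0 : ℝ)..1, √(f ((γ ∘ σ) t)) * |derivWithin (γ ∘ σ) (Icc 0 1) t|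
      = ∫ y in y0..y1, √(f (γ y)) * |γ' y| := by
    rw [integral_congr (g := fun t => L * (√(f (γ (L * t + y0))) * |γ' (L * t + y0)|)),
      intervalIntegral.integral_const_mul,
      integral_comp_mul_add (fun y => √(f (γ y)) * |γ' y|) hL.ne', smul_eq_mul, ← mul_assoc,
      mul_inv_cancel₀ hL.ne', one_mul]
    · simp [L]
    · intro t ht
      rw [uIcc_of_le zero_le_one] at ht
      beta_reduce
      rw [hψ' ht, abs_mul, abs_of_pos hL]
      simp only [Function.comp, σ]
      ring
  refine csInf_le ⟨0, ?_⟩ ⟨γ ∘ σ, hC1, fun t ht => hγ01 (hσ ht), by simp [σ], by simp [σ, L],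
    hcost.symm⟩
  rintro v ⟨ψ, -, -, -, -, rfl⟩
  exact integral_nonneg zero_le_one fun t _ => by positivity

lemma dI_le_integral_energyDensity {f : ℝ → ℝ} (hf : Continuous f)
    (hf0 : ∀ s ∈ Icc (0 : ℝ) 1, 0 ≤ f s) {ε : ℝ} (hε : 0 < ε) {U : Set (ℝ × ℝ)} (hU : IsOpen U)
    {c : ℝ × ℝ → ℝ} (hcU : ContDiffOn ℝ 1 c U) (hc01 : ∀ z ∈ U, c z ∈ Icc (0 : ℝ) 1)
    {x y0 y1 : ℝ} (hy : y0 < y1) (hxU : ∀ y ∈ Icc y0 y1, (x, y) ∈ U) :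
    dI f (c (x, y0)) (c (x, y1)) ≤ ∫ y in y0..y1, energyDensity f ε c (x, y) := by
  have hc' : ContinuousOn (fun y => fderiv ℝ c (x, y) (0, 1)) (Icc y0 y1) :=
    ((hcU.continuousOn_fderiv_of_isOpen hU le_rfl).clm_apply continuousOn_const).comp
      (by fun_prop) hxU
  have hline : ∀ y ∈ Icc y0 y1, HasDerivAt (fun y => c (x, y)) (fderiv ℝ c (x, y) (0, 1)) y :=
    fun y hy => (((hcU.contDiffAt (hU.mem_nhds (hxU y hy))).differentiableAt
      one_ne_zero).hasFDerivAt).comp_hasDerivAt y ((hasDerivAt_const y x).prodMk (hasDerivAt_id y))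
  refine (dI_le_integral_of_hasDerivAt hy hline hc' fun y hy => hc01 _ (hxU y hy)).trans ?_
  have hslice : ContinuousOn (fun y => c (x, y)) (Icc y0 y1) :=
    hcU.continuousOn.comp (by fun_prop) hxU
  refine integral_mono_on hy.le ?_ ?_ fun y hy =>
    sqrt_mul_abs_le_energy _ _ (hf0 _ (hc01 _ (hxU y hy))) hε
  · exact ((hf.comp_continuousOn hslice).sqrt.mul hc'.abs).intervalIntegrable_of_Icc hy.le
  · exact ((continuousOn_energyDensity hf ε hU hcU).comp (by fun_prop)
      hxU).intervalIntegrable_of_Icc hy.le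

lemma Cdelta_nonneg (f : ℝ → ℝ) (μ0 μ1 δ : ℝ) : 0 ≤ Cdelta f μ0 μ1 δ :=
  Real.sInf_nonneg <| by
    rintro v ⟨s, s', -, -, -, -, rfl⟩
    exact dI_nonneg f s s'

lemma Cdelta_le_dI (f : ℝ → ℝ) {μ0 μ1 δ s s' : ℝ} (hs : s ∈ Icc (0 : ℝ) 1)
    (hs' : s' ∈ Icc (0 : ℝ) 1) (hsμ : |s - μ0| ≤ δ) (hs'μ : |s' - μ1| ≤ δ) :
    Cdelta f μ0 μ1 δ ≤ dI f s s' := by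
  refine csInf_le ⟨0, ?_⟩ ⟨s, s', hs, hs', hsμ, hs'μ, rfl⟩
  rintro v ⟨s, s', -, -, -, -, rfl⟩
  exact dI_nonneg f s s'

lemma Cdelta_pos {f : ℝ → ℝ} (hf : Continuous f) {μ0 μ1 δ : ℝ} (hμ0 : μ0 ∈ Icc (0 : ℝ) 1)
    (hμ1 : μ1 ∈ Icc (0 : ℝ) 1) (hδ : 0 ≤ δ) (hgap : μ0 + δ < μ1 - δ)
    (hpos : ∀ u ∈ Icc (μ0 + δ) (μ1 - δ), 0 < f u) : 0 < Cdelta f μ0 μ1 δ := by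
  obtain ⟨u, hu, hmin⟩ :=
    isCompact_Icc.exists_isMinOn (nonempty_Icc.2 hgap.le) hf.continuousOn
  refine (mul_pos (Real.sqrt_pos.2 (hpos u hu)) (sub_pos.2 hgap)).trans_le
    (le_csInf ⟨_, μ0, μ1, hμ0, hμ1, by simpa, by simpa, rfl⟩ ?_)
  rintro v ⟨s, s', hs, hs', hsμ, hs'μ, rfl⟩
  exact sqrt_mul_sub_le_dI hf (fun y hy => hmin hy) (by linarith [(abs_le.1 hsμ).2]) hgap.le
    (by linarith [(abs_le.1 hs'μ).1]) hs hs'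

lemma measureReal_mul_le_setIntegral_prod {α β : Type*} [MeasurableSpace α] [MeasurableSpace β]
    {μ : Measure α} {ν : Measure β} [SFinite μ] [SFinite ν] {e : α × β → ℝ} {A E : Set α}
    {B : Set β} {C : ℝ} (hA : MeasurableSet A) (hB : MeasurableSet B)
    (he : IntegrableOn e (A ×ˢ B) (μ.prod ν)) (he0 : ∀ z ∈ A ×ˢ B, 0 ≤ e z)
    (hEA : E ⊆ A) (hE : MeasurableSet E) (hEfin : μ E ≠ ⊤)
    (hC : ∀ x ∈ E, C ≤ ∫ y in B, e (x, y) ∂ν) :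
    μ.real E * C ≤ ∫ z in A ×ˢ B, e z ∂μ.prod ν := by
  rw [setIntegral_prod e he]
  have hG : IntegrableOn (fun x => ∫ y in B, e (x, y) ∂ν) A μ := by
    rw [IntegrableOn, ← Measure.prod_restrict] at he
    exact he.integral_prod_left
  have hG0 : ∀ x ∈ A, 0 ≤ ∫ y in B, e (x, y) ∂ν := fun x hx =>
    setIntegral_nonneg hB fun y hy => he0 (x, y) ⟨hx, hy⟩
  calc μ.real E * C = ∫ _ in E, C ∂μ := by rw [setIntegral_const, smul_eq_mul]
    _ ≤ ∫ x in E, ∫ y in B, e (x, y) ∂ν ∂μ :=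
        setIntegral_mono_on (integrableOn_const hEfin) (hG.mono_set hEA) hE hC
    _ ≤ ∫ x in A, ∫ y in B, e (x, y) ∂ν ∂μ :=
        setIntegral_mono_set hG ((ae_restrict_iff' hA).2 (ae_of_all _ hG0)) hEA.eventuallyLE

lemma mul_Cdelta_le_setIntegral_energyDensity {f : ℝ → ℝ} (hf : Continuous f)
    (hf0 : ∀ s ∈ Icc (0 : ℝ) 1, 0 ≤ f s) {μ0 μ1 δ ε d y0 y1 : ℝ} (hd : 0 < d) (hε : 0 < ε)
    (hy : y0 < y1) {U : Set (ℝ × ℝ)} {c : ℝ × ℝ → ℝ} (hU : IsOpen U)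
    (hbox : Icc (-d) d ×ˢ Icc y0 y1 ⊆ U) (hcU : ContDiffOn ℝ 1 c U)
    (hc01 : ∀ z ∈ U, c z ∈ Icc (0 : ℝ) 1) {E : Set ℝ} (hE : E ⊆ Ioo (-d) d)
    (hEmeas : MeasurableSet E) (hEvol : ENNReal.ofReal d < volume E)
    (hE0 : ∀ x ∈ E, |c (x, y0) - μ0| ≤ δ) (hE1 : ∀ x ∈ E, |c (x, y1) - μ1| ≤ δ) :
    d * Cdelta f μ0 μ1 δ ≤ ∫ z in Ioo (-d) d ×ˢ Ioo y0 y1, energyDensity f ε c z := by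
  have hEfin : volume E ≠ ⊤ := ((measure_mono hE).trans_lt measure_Ioo_lt_top).ne
  have hdE : d ≤ volume.real E := by
    simpa [Measure.real, ENNReal.toReal_ofReal hd.le] using ENNReal.toReal_mono hEfin hEvol.le
  have hIoo : Ioo (-d) d ×ˢ Ioo y0 y1 ⊆ Icc (-d) d ×ˢ Icc y0 y1 :=
    prod_mono Ioo_subset_Icc_self Ioo_subset_Icc_self
  have hint : IntegrableOn (energyDensity f ε c) (Ioo (-d) d ×ˢ Ioo y0 y1) :=
    (((continuousOn_energyDensity hf ε hU hcU).mono hbox).integrableOn_compact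
      (isCompact_Icc.prod isCompact_Icc)).mono_set hIoo
  have hslice : ∀ x ∈ E, Cdelta f μ0 μ1 δ ≤ ∫ y in Ioo y0 y1, energyDensity f ε c (x, y) := by
    intro x hx
    have hxU : ∀ y ∈ Icc y0 y1, (x, y) ∈ U := fun y hy => hbox ⟨Ioo_subset_Icc_self (hE hx), hy⟩
    rw [← integral_Ioc_eq_integral_Ioo, ← integral_of_le hy.le]
    exact (Cdelta_le_dI f (hc01 _ (hxU y0 (left_mem_Icc.2 hy.le)))
      (hc01 _ (hxU y1 (right_mem_Icc.2 hy.le))) (hE0 x hx) (hE1 x hx)).trans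
      (dI_le_integral_energyDensity hf hf0 hε hU hcU hc01 hy hxU)
  calc d * Cdelta f μ0 μ1 δ ≤ volume.real E * Cdelta f μ0 μ1 δ :=
        mul_le_mul_of_nonneg_right hdE (Cdelta_nonneg _ _ _ _)
    _ ≤ ∫ z in Ioo (-d) d ×ˢ Ioo y0 y1, energyDensity f ε c z := by
      rw [Measure.volume_eq_prod] at hint ⊢
      exact measureReal_mul_le_setIntegral_prod measurableSet_Ioo measurableSet_Ioo hint
        (fun z hz => energyDensity_nonneg hε (hf0 _ (hc01 z (hbox (hIoo hz))))) hE hEmeas hEfin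
        hslice

theorem transition_energy_bound_general (ω K T : ℝ) (μ0 : ℝ) (hμ0 : μ0 ∈ Set.Ioo (0 : ℝ) (1 / 2))
    (hval : fbar ω K T μ0 = fbar ω K T (1 - μ0))
    (hmin : ∀ s ∈ Set.Icc (0 : ℝ) 1, s ≠ μ0 → s ≠ 1 - μ0 →
      fbar ω K T μ0 < fbar ω K T s)
    (d δ ε : ℝ) (hd : 0 < d) (hδ : 0 < δ) (hε : 0 < ε)
    (y0 y1 : ℝ) (hy : y0 < y1) (c : ℝ × ℝ → ℝ)
    (hc : ∃ U : Set (ℝ × ℝ), IsOpen U ∧ Set.Icc (-d) d ×ˢ Set.Icc y0 y1 ⊆ U ∧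
      ContDiffOn ℝ 1 c U ∧ ∀ z ∈ U, c z ∈ Set.Icc (0 : ℝ) 1)
    (E : Set ℝ) (hE : E ⊆ Set.Ioo (-d) d) (hEmeas : MeasurableSet E)
    (hEvol : ENNReal.ofReal d < MeasureTheory.volume E)
    (hE0 : ∀ x ∈ E, |c (x, y0) - μ0| ≤ δ)
    (hE1 : ∀ x ∈ E, |c (x, y1) - (1 - μ0)| ≤ δ) :
    d * Cdelta (fun s => fbar ω K T s - fbar ω K T μ0) μ0 (1 - μ0) δ ≤
      (∫ z in Set.Ioo (-d) d ×ˢ Set.Ioo y0 y1,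
        ((1 / ε) * (fbar ω K T (c z) - fbar ω K T μ0) + ε * gradSq c z)) ∧
    (2 * δ < (1 - μ0) - μ0 →
      0 < Cdelta (fun s => fbar ω K T s - fbar ω K T μ0) μ0 (1 - μ0) δ) := by
  obtain ⟨U, hU, hbox, hcU, hc01⟩ := hc
  set f : ℝ → ℝ := fun s => fbar ω K T s - fbar ω K T μ0
  have hf : Continuous f := (continuous_fbar ω K T).sub continuous_const
  have hf0 : ∀ s ∈ Icc (0 : ℝ) 1, 0 ≤ f s := by
    intro s hs
    rcases eq_or_ne s μ0 with rfl | h0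
    · simp [f]
    rcases eq_or_ne s (1 - μ0) with rfl | h1
    · simp [f, hval]
    exact sub_nonneg.2 (hmin s hs h0 h1).le
  have hμ0I : μ0 ∈ Icc (0 : ℝ) 1 := ⟨hμ0.1.le, by linarith [hμ0.2]⟩
  have hμ1I : 1 - μ0 ∈ Icc (0 : ℝ) 1 := ⟨by linarith [hμ0.2], by linarith [hμ0.1]⟩
  refine ⟨mul_Cdelta_le_setIntegral_energyDensity hf hf0 hd hε hy hU hbox hcU hc01 hE hEmeas
    hEvol hE0 hE1, fun hgap => Cdelta_pos hf hμ0I hμ1I hδ.le (by linarith) fun u hu => ?_⟩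
  exact sub_pos.2 (hmin u ⟨by linarith [hu.1, hμ0.1], by linarith [hu.2, hμ0.1]⟩
    (by linarith [hu.1]) (by linarith [hu.2]))

/-- Transition energy in a box: if on a set `E ⊆ (-d,d)` of measure `> d` the values
`c(·,y0)` are δ-close to `μ0` and `c(·,y1)` are δ-close to `μ1`, then the Modica–Mortola
part of the energy on the box is at least `d · C_δ`; moreover `C_δ > 0` if `2δ < μ1-μ0`. -/
theorem transition_energy_bound (ω K T : ℝ) (hK : 0 < K) (hT : 0 < T)
    (hω : 2 * K * T < ω) (μ0 : ℝ) (hμ0 : μ0 ∈ Set.Ioo (0 : ℝ) (1 / 2))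
    (hval : fbar ω K T μ0 = fbar ω K T (1 - μ0))
    (hmin : ∀ s ∈ Set.Icc (0 : ℝ) 1, s ≠ μ0 → s ≠ 1 - μ0 →
      fbar ω K T μ0 < fbar ω K T s)
    (d δ ε : ℝ) (hd : 0 < d) (hδ : 0 < δ) (hε : 0 < ε)
    (y0 y1 : ℝ) (hy : y0 < y1) (c : ℝ × ℝ → ℝ)
    (hc : ∃ U : Set (ℝ × ℝ), IsOpen U ∧ Set.Icc (-d) d ×ˢ Set.Icc y0 y1 ⊆ U ∧
      ContDiffOn ℝ 1 c U ∧ ∀ z ∈ U, c z ∈ Set.Icc (0 : ℝ) 1)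
    (E : Set ℝ) (hE : E ⊆ Set.Ioo (-d) d) (hEmeas : MeasurableSet E)
    (hEvol : ENNReal.ofReal d < MeasureTheory.volume E)
    (hE0 : ∀ x ∈ E, |c (x, y0) - μ0| ≤ δ)
    (hE1 : ∀ x ∈ E, |c (x, y1) - (1 - μ0)| ≤ δ) :
    d * Cdelta (fun s => fbar ω K T s - fbar ω K T μ0) μ0 (1 - μ0) δ ≤
      (∫ z in Set.Ioo (-d) d ×ˢ Set.Ioo y0 y1,
        ((1 / ε) * (fbar ω K T (c z) - fbar ω K T μ0) + ε * gradSq c z)) ∧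
    (2 * δ < (1 - μ0) - μ0 →
      0 < Cdelta (fun s => fbar ω K T s - fbar ω K T μ0) μ0 (1 - μ0) δ) :=
  transition_energy_bound_general ω K T μ0 hμ0 hval hmin d δ ε hd hδ hε y0 y1 hy c hc E hE hEmeas
    hEvol hE0 hE1
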